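/- Let G be a finite simple graph and let W = (W_1, …, W_k) be a finite family of nonempty subsets of V(G) such that every W_i equals the open neighbourhood N(v) of some vertex v of G. Then the chromatic number of the Chithra graph C_W(G) equals the chromatic number of G, i.e., χ(C_W(G)) = χ(G). -/

import Mathlib

open SimpleGraph

/-- The Chithra graph `C_W(G)`: add one new vertex `u_i` per index `i`,
joined exactly to the vertices of `W i`; new vertices are pairwise non-adjacent. -/
def SimpleGraph.Chithra {V ι : Type*} (G : SimpleGraph V) (W : ι → Set V) :
    SimpleGraph (V ⊕ ι) where
  Adj a b :=
    match a, b with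
    | Sum.inl v, Sum.inl w => G.Adj v w
    | Sum.inl v, Sum.inr i => v ∈ W i
    | Sum.inr i, Sum.inl v => v ∈ W i
    | Sum.inr _, Sum.inr _ => False
  symm := by
    constructor
    rintro (v | i) (w | j) h
    · exact G.adj_symm h
    · exact h
    · exact h
    · exact h.elim
  loopless := by
    constructor
    rintro (v | i) h
    · exact G.irrefl h
    · exact h

/-- The closed neighbourhood `N[w]` of a vertex. -/
def SimpleGraph.closedNbhd {V : Type*} (H : SimpleGraph V) (w : V) : Set V :=
  insert w (H.neighborSet w)

/-- A proper colouring of `H` using exactly `k` colours such that every vertex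
belongs to a rainbow neighbourhood, i.e. lies in some closed neighbourhood
containing all `k` colours. -/
def SimpleGraph.IsJColoring {V : Type*} (H : SimpleGraph V) (k : ℕ) (c : V → Fin k) : Prop :=
  (∀ ⦃u v⦄, H.Adj u v → c u ≠ c v) ∧
  Function.Surjective c ∧
  ∀ v, ∃ w, v ∈ H.closedNbhd w ∧ ∀ j : Fin k, ∃ u ∈ H.closedNbhd w, c u = j

/-- `H` admits a J-colouring. -/
def SimpleGraph.HasJColoring {V : Type*} (H : SimpleGraph V) : Prop :=
  ∃ (k : ℕ) (c : V → Fin k), H.IsJColoring k c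

/-- `J(H)`: the maximum number of colours in a J-colouring of `H`. -/
noncomputable def SimpleGraph.jNum {V : Type*} (H : SimpleGraph V) : ℕ :=
  sSup {k | ∃ c : V → Fin k, H.IsJColoring k c}

/-! Each new vertex `u_i` can be folded onto a vertex `f i` of `G` whose neighbourhood contains
`W i`; this is a homomorphism `C_W(G) →g G`, and together with the inclusion `G →g C_W(G)` it
shows that the two graphs have the same chromatic number. -/

namespace SimpleGraph.Chithra

variable {V ι : Type*} (G : SimpleGraph V) (W : ι → Set V)

def inlHom : G →g G.Chithra W where
  toFun := Sum.inl
  map_rel' h := h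

variable {G W}

def foldHom (f : ι → V) (hf : ∀ i, W i ⊆ G.neighborSet (f i)) : G.Chithra W →g G where
  toFun := Sum.elim id f
  map_rel' := by
    rintro (v | i) (w | j) h
    · exact h
    · exact (hf j h).symm
    · exact hf i h
    · exact h.elim

theorem chromaticNumber_eq_of_subset_neighborSet (hW : ∀ i, ∃ v, W i ⊆ G.neighborSet v) :
    (G.Chithra W).chromaticNumber = G.chromaticNumber := by
  choose f hf using hW
  exact le_antisymm (chromaticNumber_mono_of_hom (foldHom f hf))
    (chromaticNumber_mono_of_hom (inlHom G W))

end SimpleGraph.Chithra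

theorem chithra_chromaticNumber_of_neighborhoods_general {V ι : Type*}
    (G : SimpleGraph V) (W : ι → Set V)
    (hW : ∀ i, ∃ v : V, W i = G.neighborSet v) :
    (G.Chithra W).chromaticNumber = G.chromaticNumber :=
  Chithra.chromaticNumber_eq_of_subset_neighborSet fun i => (hW i).imp fun _ => Eq.subset

/-- If each `W i` is the open neighbourhood of some vertex of `G`, then
`χ(C_W(G)) = χ(G)`. -/
theorem chithra_chromaticNumber_of_neighborhoods {V ι : Type*} [Fintype V] [Fintype ι]
    (G : SimpleGraph V) (W : ι → Set V)
    (hne : ∀ i, (W i).Nonempty)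
    (hW : ∀ i, ∃ v : V, W i = G.neighborSet v) :
    (G.Chithra W).chromaticNumber = G.chromaticNumber :=
  chithra_chromaticNumber_of_neighborhoods_general G W hW
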